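/- arXiv:2301.02545 — 3 statements merged into one kernel-verified Lean document; each statement's English description precedes it below -/
import Mathlib

section
/- Let A be a positively graded finitely generated k-algebra and integral domain and ν : A∖{0} → (Γ,<) a full-rank homogeneous valuation whose value semigroup S(A,ν) is minimum well-ordered, i.e. every nonempty subset of S(A,ν) has a unique minimal element with respect to <. If B = {b_1,…,b_n} is a finite Khovanskii basis for ν, then B generates A as a k-algebra (every element of A is a polynomial expression in b_1,…,b_n with coefficients in k). -/
/-
Take a counterexample `a` of least value, which exists since the value semigroup is well ordered.
The Khovanskii basis gives `p` in the subalgebra with `ν (a - p) < ν a`, and `a - p` is again a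
counterexample, contradicting minimality.
-/

open scoped DirectSum

noncomputable section

/-- `B` is a Khovanskii basis for `ν`: for every nonzero `a` there is an element `p`
of the subalgebra generated by `B` with `a = p` or `ν(a - p) < ν(a)`; this says
exactly that the images of the elements of `B` generate `gr_ν(A)` as a `k`-algebra. -/
def IsKhovanskiiBasis (k : Type*) {A Γ : Type*} [Field k] [CommRing A] [Algebra k A]
    [LinearOrder Γ] (ν : A → Γ) (B : Set A) : Prop :=
  ∀ a : A, a ≠ 0 → ∃ p ∈ Algebra.adjoin k B, a = p ∨ ν (a - p) < ν a

/-- `ν` is homogeneous: for nonzero `f` with homogeneous decomposition `f = Σ f_w`,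
`ν f` is the maximum of the `ν f_w`. -/
def IsHomogeneousVal {k A Γ : Type*} [Field k] [CommRing A] [Algebra k A] {m : ℕ}
    (𝒜 : (Fin m → ℕ) → Submodule k A) [GradedAlgebra 𝒜] [LinearOrder Γ]
    (ν : A → Γ) : Prop :=
  ∀ a : A, a ≠ 0 →
    (∃ w, ((DirectSum.decompose 𝒜 a w : A) ≠ 0 ∧ ν (DirectSum.decompose 𝒜 a w : A) = ν a)) ∧
    ∀ w, (DirectSum.decompose 𝒜 a w : A) ≠ 0 → ν (DirectSum.decompose 𝒜 a w : A) ≤ ν a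

theorem AddSubgroup.eq_top_of_forall_exists_sub_lt {G Γ : Type*} [AddGroup G] [Preorder Γ]
    (ν : G → Γ) (H : AddSubgroup G)
    (hwo : ∀ s : Set Γ, s ⊆ ν '' {a : G | a ≠ 0} → s.Nonempty → ∃ γ, IsLeast s γ)
    (happrox : ∀ a : G, a ≠ 0 → ∃ p ∈ H, a = p ∨ ν (a - p) < ν a) :
    H = ⊤ := by
  by_contra htop
  obtain ⟨a₀, ha₀⟩ : ∃ a, a ∉ H := by
    simpa [AddSubgroup.eq_top_iff'] using htop
  have hne_zero : ∀ a ∉ H, a ≠ 0 := fun a ha h => ha (h ▸ H.zero_mem)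
  obtain ⟨_, ⟨a, haH, rfl⟩, hleast⟩ :=
    hwo (ν '' {a | a ∉ H}) (Set.image_mono hne_zero) ⟨_, a₀, ha₀, rfl⟩
  obtain ⟨p, hpH, rfl | hlt⟩ := happrox a (hne_zero a haH)
  · exact haH hpH
  · have hdiff : a - p ∉ H := fun h => haH (by simpa using H.add_mem h hpH)
    exact not_le_of_gt hlt (hleast ⟨a - p, hdiff, rfl⟩)

theorem khovanskii_basis_generates_algebra_general
    {k A Γ : Type*} [Field k]
    [CommRing A] [Algebra k A]
    [LinearOrder Γ]
    -- `ν` is a valuation (max-convention):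
    (ν : A → Γ)
    -- the value semigroup `S(A,ν)` is minimum well-ordered:
    (hwo : ∀ s : Set Γ, s ⊆ ν '' {a : A | a ≠ 0} → s.Nonempty → ∃ γ, IsLeast s γ)
    -- `B` is a finite Khovanskii basis consisting of nonzero elements:
    (B : Set A)
    (hKB : IsKhovanskiiBasis k ν B) :
    -- then `B` generates `A` as a `k`-algebra:
    Algebra.adjoin k B = ⊤ := by
  have htop := AddSubgroup.eq_top_of_forall_exists_sub_lt ν
    (Algebra.adjoin k B).toSubmodule.toAddSubgroup hwo hKB
  exact Algebra.eq_top_iff.2 fun a => (AddSubgroup.eq_top_iff' _).1 htop a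

theorem khovanskii_basis_generates_algebra
    {k A Γ : Type*} [Field k] [IsAlgClosed k] [CharZero k]
    [CommRing A] [IsDomain A] [Algebra k A] (hfg : Algebra.FiniteType k A)
    [AddCommGroup Γ] [LinearOrder Γ] [IsOrderedAddMonoid Γ]
    {d m : ℕ}
    -- `A` is positively (multi-)graded:
    (𝒜 : (Fin m → ℕ) → Submodule k A) [GradedAlgebra 𝒜]
    -- Krull dimension of `A` is `d`:
    (hdim : ringKrullDim A = d)
    -- `ν` is a valuation (max-convention):
    (ν : A → Γ)
    (hmul : ∀ a b : A, a ≠ 0 → b ≠ 0 → ν (a * b) = ν a + ν b)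
    (hadd : ∀ a b : A, a ≠ 0 → b ≠ 0 → a + b ≠ 0 → ν (a + b) ≤ max (ν a) (ν b))
    (hsmul : ∀ (c : k) (a : A), c ≠ 0 → a ≠ 0 → ν (algebraMap k A c * a) = ν a)
    -- `ν` is homogeneous and of full rank:
    (hhom : IsHomogeneousVal 𝒜 ν)
    (hrank : Module.rank ℤ ↥(Submodule.span ℤ (AddSubgroup.closure (ν '' {a : A | a ≠ 0}) : Set Γ)) = d)
    -- the value semigroup `S(A,ν)` is minimum well-ordered:
    (hwo : ∀ s : Set Γ, s ⊆ ν '' {a : A | a ≠ 0} → s.Nonempty → ∃ γ, IsLeast s γ)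
    -- `B` is a finite Khovanskii basis consisting of nonzero elements:
    (B : Set A) (hBfin : B.Finite) (hB0 : (0 : A) ∉ B)
    (hKB : IsKhovanskiiBasis k ν B) :
    -- then `B` generates `A` as a `k`-algebra:
    Algebra.adjoin k B = ⊤ :=
  khovanskii_basis_generates_algebra_general ν hwo B hKB
end
end

section
/- Let I ⊆ S = k[x_1,…,x_n] be a homogeneous ideal with A = S/I a domain, M ∈ Q^{d×n} a weighting matrix with total group order ≺ on Q^d, and < a term order on S such that init_<(init_M(I)) = init_<(I). Let B_< = {x̄^b : x^b ∉ init_<(I)} be the standard monomial basis of A. Then for every nonzero f̄ ∈ A, writing f̄ = Σ_{x̄^b ∈ B_<} c_b x̄^b as a linear combination of standard monomials, the quasivaluation with weighting matrix M satisfies ν_M(f̄) = max_≺{Mb : c_b ≠ 0}. -/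
/- STATEMENT 6: let `M` be a weighting matrix, `<` a term order with
`init_<(init_M(I)) = init_<(I)`, and `B_<` the standard monomial basis of
`A = S/I`.  If `f̄ = Σ c_b x̄^b` is the expansion of a nonzero element of `A` in
standard monomials (i.e. `f̄ = π(g)` with `g` supported on standard monomials),
then `ν_M(f̄) = max_≺ {M·b : c_b ≠ 0} = ν̃_M(g)`. -/

open MvPolynomial
open scoped Classical

noncomputable section

/-- `M·a ∈ ℚ^d` for a monomial exponent `a`. -/
def Mdot {d n : ℕ} (M : Fin d → Fin n → ℚ) (a : Fin n →₀ ℕ) : Fin d → ℚ :=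
  fun t => ∑ j, M t j * (a j : ℚ)

/-- The initial form of `f` with respect to the weighting matrix `M` and the total
order `le` on `ℚ^d`. -/
def initFormM {k : Type*} [Field k] {d n : ℕ} (le : (Fin d → ℚ) → (Fin d → ℚ) → Prop)
    (M : Fin d → Fin n → ℚ) (f : MvPolynomial (Fin n) k) : MvPolynomial (Fin n) k :=
  ∑ b ∈ f.support.filter (fun b => ∀ a ∈ f.support, le (Mdot M a) (Mdot M b)),
    monomial b (coeff b f)

/-- The initial ideal of `I` with respect to the weighting matrix `M`. -/
def initIdealM {k : Type*} [Field k] {d n : ℕ} (le : (Fin d → ℚ) → (Fin d → ℚ) → Prop)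
    (M : Fin d → Fin n → ℚ) (I : Ideal (MvPolynomial (Fin n) k)) :
    Ideal (MvPolynomial (Fin n) k) :=
  Ideal.span {g | ∃ f ∈ I, f ≠ 0 ∧ g = initFormM le M f}

/-- `tle` is a term order on the monomials of `k[x_1,…,x_n]`. -/
def IsTermOrder {n : ℕ} (tle : (Fin n →₀ ℕ) → (Fin n →₀ ℕ) → Prop) : Prop :=
  IsLinearOrder (Fin n →₀ ℕ) tle ∧ (∀ a, tle 0 a) ∧
    (∀ a b c : Fin n →₀ ℕ, tle a b → tle (a + c) (b + c))

/-- The leading term of `f` with respect to a term order `tle`. -/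
def leadForm {k : Type*} [Field k] {n : ℕ} (tle : (Fin n →₀ ℕ) → (Fin n →₀ ℕ) → Prop)
    (f : MvPolynomial (Fin n) k) : MvPolynomial (Fin n) k :=
  ∑ b ∈ f.support.filter (fun b => ∀ a ∈ f.support, tle a b),
    monomial b (coeff b f)

/-- The initial ideal (leading term ideal) of `I` with respect to a term order. -/
def leadIdeal {k : Type*} [Field k] {n : ℕ} (tle : (Fin n →₀ ℕ) → (Fin n →₀ ℕ) → Prop)
    (I : Ideal (MvPolynomial (Fin n) k)) : Ideal (MvPolynomial (Fin n) k) :=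
  Ideal.span {g | ∃ f ∈ I, f ≠ 0 ∧ g = leadForm tle f}

/-- `v = ν̃_M(f) = max_≺ {M·a : c_a ≠ 0}`. -/
def tildeValIs {k : Type*} [Field k] {d n : ℕ} (le : (Fin d → ℚ) → (Fin d → ℚ) → Prop)
    (M : Fin d → Fin n → ℚ) (f : MvPolynomial (Fin n) k) (v : Fin d → ℚ) : Prop :=
  (∃ b ∈ f.support, Mdot M b = v) ∧ ∀ a ∈ f.support, le (Mdot M a) v

/-- `v = ν_M(x) = min_≺ {ν̃_M(f) : π(f) = x}`, the quasivaluation with weighting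
matrix `M` evaluated at `x ∈ A = S/I`. -/
def quasiValIs {k : Type*} [Field k] {d n : ℕ} (le : (Fin d → ℚ) → (Fin d → ℚ) → Prop)
    (M : Fin d → Fin n → ℚ) (I : Ideal (MvPolynomial (Fin n) k))
    (x : MvPolynomial (Fin n) k ⧸ I) (v : Fin d → ℚ) : Prop :=
  (∃ f, f ≠ 0 ∧ Ideal.Quotient.mk I f = x ∧ tildeValIs le M f v) ∧
  (∀ f u, f ≠ 0 → Ideal.Quotient.mk I f = x → tildeValIs le M f u → le v u)

/-!
Suppose `f̄ = π(g)` with `g` supported on standard monomials and `v = ν̃_M(g)`, and some `f` with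
`π(f) = π(g)` had `ν̃_M(f) ≺ v`. Then all weights of `f` lie strictly below `v`, so `h = f - g ∈ I`
is nonzero and its `M`-initial form is the `M`-initial form of `-g`, hence supported on standard
monomials. But it lies in `init_M(I)`, so its leading monomial lies in
`init_<(init_M(I)) = init_<(I)`, a contradiction.
-/

theorem Finset.exists_max_image_rel {α β : Type*} (r : β → β → Prop) [IsTrans β r] [Std.Total r]
    (f : α → β) {s : Finset α} (hs : s.Nonempty) : ∃ b ∈ s, ∀ a ∈ s, r (f a) (f b) := by
  induction hs using Finset.Nonempty.cons_induction with
  | singleton a => exact ⟨a, mem_singleton_self a, fun x hx => mem_singleton.1 hx ▸ refl_of r _⟩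
  | cons a s ha hs ih =>
    obtain ⟨b, hb, hmax⟩ := ih
    rcases total_of r (f a) (f b) with hab | hba
    · refine ⟨b, mem_cons_of_mem hb, fun x hx => ?_⟩
      rcases mem_cons.1 hx with rfl | hx
      exacts [hab, hmax x hx]
    · refine ⟨a, mem_cons_self a s, fun x hx => ?_⟩
      rcases mem_cons.1 hx with rfl | hx
      exacts [refl_of r _, trans_of r (hmax x hx) hba]

theorem MvPolynomial.coeff_sum_monomial_coeff_filter {σ R : Type*} [CommSemiring R]
    (p : MvPolynomial σ R) (P : (σ →₀ ℕ) → Prop) [DecidablePred P] (a : σ →₀ ℕ) :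
    coeff a (∑ b ∈ p.support.filter P, monomial b (coeff b p)) = if P a then coeff a p else 0 := by
  simp only [coeff_sum, coeff_monomial, Finset.sum_ite_eq', Finset.mem_filter, mem_support_iff]
  by_cases ha : coeff a p = 0 <;> simp [ha]

section LeadingTerm

variable {k : Type*} [Field k] {n : ℕ} (tle : (Fin n →₀ ℕ) → (Fin n →₀ ℕ) → Prop)

theorem leadForm_eq_monomial [Std.Antisymm tle] {F : MvPolynomial (Fin n) k} {b : Fin n →₀ ℕ}
    (hb : b ∈ F.support) (hmax : ∀ a ∈ F.support, tle a b) :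
    leadForm tle F = monomial b (coeff b F) := by
  have hlead : F.support.filter (fun b => ∀ a ∈ F.support, tle a b) = {b} :=
    Finset.eq_singleton_iff_unique_mem.2 ⟨Finset.mem_filter.2 ⟨hb, hmax⟩, fun a ha =>
      antisymm_of tle (hmax a (Finset.mem_filter.1 ha).1) ((Finset.mem_filter.1 ha).2 b hb)⟩
  rw [leadForm, hlead, Finset.sum_singleton]

theorem exists_monomial_one_mem_leadIdeal [IsLinearOrder _ tle]
    {J : Ideal (MvPolynomial (Fin n) k)} {F : MvPolynomial (Fin n) k} (hF : F ∈ J) (hF0 : F ≠ 0) :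
    ∃ b ∈ F.support, monomial b (1 : k) ∈ leadIdeal tle J := by
  obtain ⟨b, hb, hmax⟩ := Finset.exists_max_image_rel tle id (support_nonempty.2 hF0)
  have hlead : monomial b (coeff b F) ∈ leadIdeal tle J :=
    leadForm_eq_monomial tle hb hmax ▸ Ideal.subset_span ⟨F, hF, hF0, rfl⟩
  refine ⟨b, hb, ?_⟩
  simpa [C_mul_monomial, inv_mul_cancel₀ (mem_support_iff.1 hb)] using
    Ideal.mul_mem_left _ (C (coeff b F)⁻¹) hlead

end LeadingTerm

section InitialForm

variable {k : Type*} [Field k] {d n : ℕ} {le : (Fin d → ℚ) → (Fin d → ℚ) → Prop}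
  {M : Fin d → Fin n → ℚ} {f g : MvPolynomial (Fin n) k} {v : Fin d → ℚ}

theorem tildeValIs.ne_zero (hf : tildeValIs le M f v) : f ≠ 0 := by
  obtain ⟨b, hb, -⟩ := hf.1
  exact ne_zero_iff.2 ⟨b, mem_support_iff.1 hb⟩

theorem tildeValIs_neg : tildeValIs le M (-f) v ↔ tildeValIs le M f v := by
  simp only [tildeValIs, support_neg]

theorem support_initFormM_subset : (initFormM le M f).support ⊆ f.support := by
  intro a ha
  rw [mem_support_iff, initFormM, coeff_sum_monomial_coeff_filter] at ha
  exact mem_support_iff.2 fun h => ha (by simp [h])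

theorem coeff_initFormM [IsTrans _ le] (hf : tildeValIs le M f v) (a : Fin n →₀ ℕ) :
    coeff a (initFormM le M f) = if le v (Mdot M a) then coeff a f else 0 := by
  obtain ⟨⟨b₀, hb₀, rfl⟩, hmax⟩ := hf
  rw [initFormM, coeff_sum_monomial_coeff_filter]
  exact if_congr ⟨fun h => h b₀ hb₀, fun h c hc => trans_of le (hmax c hc) h⟩ rfl rfl

theorem initFormM_ne_zero [IsTrans _ le] [Std.Total le] (hf : tildeValIs le M f v) :
    initFormM le M f ≠ 0 := by
  obtain ⟨b, hb, hbv⟩ := hf.1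
  refine ne_zero_iff.2 ⟨b, ?_⟩
  rw [coeff_initFormM hf, hbv, if_pos (refl_of le v)]
  exact mem_support_iff.1 hb

theorem tildeValIs_add_of_forall_not_le [IsTrans _ le] [Std.Total le] (hg : tildeValIs le M g v)
    (hf : ∀ a ∈ f.support, ¬ le v (Mdot M a)) : tildeValIs le M (g + f) v := by
  obtain ⟨⟨b₀, hb₀, hb₀v⟩, hmax⟩ := hg
  have hfb₀ : coeff b₀ f = 0 := notMem_support_iff.1 fun h => hf b₀ h (hb₀v ▸ refl_of le _)
  refine ⟨⟨b₀, by simpa [hfb₀] using hb₀, hb₀v⟩, fun a ha => ?_⟩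
  rcases Finset.mem_union.1 (support_add ha) with ha | ha
  exacts [hmax a ha, (total_of le _ _).resolve_right (hf a ha)]

theorem initFormM_add_of_forall_not_le [IsTrans _ le] [Std.Total le] (hg : tildeValIs le M g v)
    (hf : ∀ a ∈ f.support, ¬ le v (Mdot M a)) : initFormM le M (g + f) = initFormM le M g := by
  ext a
  rw [coeff_initFormM (tildeValIs_add_of_forall_not_le hg hf), coeff_initFormM hg, coeff_add]
  split_ifs with ha
  · rw [notMem_support_iff.1 fun h => hf a h ha, add_zero]
  · rfl

end InitialForm

theorem quasivaluation_computed_on_standard_monomial_expansion_general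
    {k : Type*} [Field k] {n d : ℕ}
    (I : Ideal (MvPolynomial (Fin n) k))
    -- a translation-invariant total order on `ℚ^d` and a weighting matrix:
    (le : (Fin d → ℚ) → (Fin d → ℚ) → Prop)
    (hlin : IsLinearOrder (Fin d → ℚ) le)
    (M : Fin d → Fin n → ℚ)
    -- a term order `<` with `init_<(init_M(I)) = init_<(I)`:
    (tle : (Fin n →₀ ℕ) → (Fin n →₀ ℕ) → Prop)
    (hterm : IsTermOrder tle)
    (hMC : leadIdeal tle (initIdealM le M I) = leadIdeal tle I) :
    -- for nonzero `g` supported on standard monomials, `ν_M(π(g)) = ν̃_M(g)`,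
    -- the `le`-maximum of `M·b` over the support of `g`:
    ∀ g : MvPolynomial (Fin n) k, g ≠ 0 →
      (∀ b ∈ g.support, monomial b (1 : k) ∉ leadIdeal tle I) →
      ∃ v : Fin d → ℚ, tildeValIs le M g v ∧
        quasiValIs le M I (Ideal.Quotient.mk I g) v := by
  have := hlin
  have := hterm.1
  intro g hg hstd
  obtain ⟨b₀, hb₀, hmax⟩ := Finset.exists_max_image_rel le (Mdot M) (support_nonempty.2 hg)
  have hgv : tildeValIs le M g (Mdot M b₀) := ⟨⟨b₀, hb₀, rfl⟩, hmax⟩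
  refine ⟨_, hgv, ⟨g, hg, rfl, hgv⟩, fun f u _ hfg hfu => ?_⟩
  by_contra hvu
  have hf : ∀ a ∈ f.support, ¬ le (Mdot M b₀) (Mdot M a) :=
    fun a ha h => hvu (trans_of le h (hfu.2 a ha))
  have hneg := tildeValIs_neg.2 hgv
  have hsub : f - g = -g + f := sub_eq_neg_add f g
  have hinit : initFormM le M (f - g) = initFormM le M (-g) := by
    rw [hsub, initFormM_add_of_forall_not_le hneg hf]
  have hmem : initFormM le M (f - g) ∈ initIdealM le M I :=
    Ideal.subset_span ⟨f - g, Ideal.Quotient.eq.1 hfg,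
      hsub ▸ (tildeValIs_add_of_forall_not_le hneg hf).ne_zero, rfl⟩
  obtain ⟨b, hb, hbI⟩ :=
    exists_monomial_one_mem_leadIdeal tle hmem (hinit ▸ initFormM_ne_zero hneg)
  rw [hMC] at hbI
  rw [hinit] at hb
  exact hstd b (support_neg (p := g) ▸ support_initFormM_subset hb) hbI

theorem quasivaluation_computed_on_standard_monomial_expansion
    {k : Type*} [Field k] [IsAlgClosed k] [CharZero k] {n d : ℕ}
    (I : Ideal (MvPolynomial (Fin n) k)) [IsDomain (MvPolynomial (Fin n) k ⧸ I)]
    -- `I` is homogeneous: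
    (hIhom : ∀ f ∈ I, ∀ j : ℕ, MvPolynomial.homogeneousComponent j f ∈ I)
    -- a translation-invariant total order on `ℚ^d` and a weighting matrix:
    (le : (Fin d → ℚ) → (Fin d → ℚ) → Prop)
    (hlin : IsLinearOrder (Fin d → ℚ) le)
    (hcompat : ∀ u v w : Fin d → ℚ, le u v → le (u + w) (v + w))
    (M : Fin d → Fin n → ℚ)
    -- a term order `<` with `init_<(init_M(I)) = init_<(I)`:
    (tle : (Fin n →₀ ℕ) → (Fin n →₀ ℕ) → Prop)
    (hterm : IsTermOrder tle)
    (hMC : leadIdeal tle (initIdealM le M I) = leadIdeal tle I) :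
    -- for nonzero `g` supported on standard monomials, `ν_M(π(g)) = ν̃_M(g)`,
    -- the `le`-maximum of `M·b` over the support of `g`:
    ∀ g : MvPolynomial (Fin n) k, g ≠ 0 →
      (∀ b ∈ g.support, monomial b (1 : k) ∉ leadIdeal tle I) →
      ∃ v : Fin d → ℚ, tildeValIs le M g v ∧
        quasiValIs le M I (Ideal.Quotient.mk I g) v :=
  quasivaluation_computed_on_standard_monomial_expansion_general I le hlin M tle hterm hMC
end
end

section
/- Let (Z^d, <) be totally ordered by a translation-invariant total order (for instance the lexicographic order) and let F ⊆ Z^d be a finite subset. Then there exists a group homomorphism e : Z^d → Z such that for all m, n ∈ F, m < n implies e(m) < e(n). -/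
/-!
The strictly positive elements of a translation-invariant order form an additive subsemigroup
`C` of `ℤ^d` with `0 ∉ C`, and `n - m ∈ C` whenever `m < n`. So it suffices to find, for every
finite `S ⊆ C`, an integer vector `u` with `u ⬝ᵥ s > 0` on `S`. This goes by Fourier–Motzkin
elimination of the first coordinate: the tails of the `s ∈ S` with `s₀ = 0` and of the
combinations `p₀ • n - n₀ • p` with `p₀ > 0 > n₀` lie in the subsemigroup `{w | (0, w) ∈ C}`
of `ℤ^(d-1)`, so by induction some `u` is positive on them. The constraints
`t * s₀ + u ⬝ᵥ tail s > 0` on a first coefficient `t` are then lower bounds (from the `p`) and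
upper bounds (from the `n`) which are pairwise compatible, so a rational `t = x / y` meets all
of them and `(x, y • u)` works.
-/

open Finset Matrix

theorem exists_forall_pos_mul_add {K ι : Type*} [Field K] [LinearOrder K] [IsStrictOrderedRing K]
    (s : Finset ι) (c a : ι → K) (hzero : ∀ i ∈ s, c i = 0 → 0 < a i)
    (hpair : ∀ i ∈ s, ∀ j ∈ s, 0 < c i → c j < 0 → 0 < c i * a j - c j * a i) :
    ∃ t, ∀ i ∈ s, 0 < t * c i + a i := by
  obtain ⟨t, hlower, hupper⟩ := Finset.exists_between'
    ((s.filter (0 < c ·)).image fun i => -a i / c i)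
    ((s.filter (c · < 0)).image fun j => a j / -c j) <| by
      simp only [mem_image, mem_filter, forall_exists_index, and_imp]
      rintro _ i hi hci rfl _ j hj hcj rfl
      rw [div_lt_div_iff₀ hci (neg_pos.2 hcj)]
      linarith [hpair i hi j hj hci hcj]
  refine ⟨t, fun i hi => ?_⟩
  rcases lt_trichotomy (c i) 0 with hci | hci | hci
  · have := hupper _ (mem_image_of_mem _ (mem_filter.2 ⟨hi, hci⟩))
    linarith [(lt_div_iff₀ (neg_pos.2 hci)).1 this]
  · simpa [hci] using hzero i hi hci
  · have := hlower _ (mem_image_of_mem _ (mem_filter.2 ⟨hi, hci⟩))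
    linarith [(div_lt_iff₀ hci).1 this]

theorem exists_int_forall_pos_mul_add {ι : Type*} (s : Finset ι) (c a : ι → ℤ)
    (hzero : ∀ i ∈ s, c i = 0 → 0 < a i)
    (hpair : ∀ i ∈ s, ∀ j ∈ s, 0 < c i → c j < 0 → 0 < c i * a j - c j * a i) :
    ∃ x y : ℤ, ∀ i ∈ s, 0 < x * c i + y * a i := by
  obtain ⟨t, ht⟩ := exists_forall_pos_mul_add (K := ℚ) s (fun i => c i) (fun i => a i)
    (fun i hi hci => by exact_mod_cast hzero i hi (by exact_mod_cast hci))
    fun i hi j hj hci hcj => by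
      exact_mod_cast hpair i hi j hj (by exact_mod_cast hci) (by exact_mod_cast hcj)
  refine ⟨t.num, t.den, fun i hi => ?_⟩
  have hcast : ((t.num * c i + t.den * a i : ℤ) : ℚ) = t.den * (t * c i + a i) := by
    push_cast
    rw [← Rat.mul_den_eq_num]
    ring
  exact_mod_cast hcast ▸ mul_pos (by exact_mod_cast t.den_pos) (ht i hi)

theorem exists_dotProduct_pos_of_tail {d : ℕ} (S : Finset (Fin (d + 1) → ℤ)) (u : Fin d → ℤ)
    (hzero : ∀ s ∈ S, vecHead s = 0 → 0 < u ⬝ᵥ vecTail s)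
    (hpair : ∀ p ∈ S, ∀ n ∈ S, 0 < vecHead p → vecHead n < 0 →
      0 < u ⬝ᵥ vecTail (vecHead p • n - vecHead n • p)) :
    ∃ v, ∀ s ∈ S, 0 < v ⬝ᵥ s := by
  have hpair' : ∀ p ∈ S, ∀ n ∈ S, 0 < vecHead p → vecHead n < 0 →
      0 < vecHead p * (u ⬝ᵥ vecTail n) - vecHead n * (u ⬝ᵥ vecTail p) := by
    intro p hp n hn hp0 hn0
    have h := hpair p hp n hn hp0 hn0
    change 0 < u ⬝ᵥ (vecHead p • vecTail n - vecHead n • vecTail p) at h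
    rwa [dotProduct_sub, dotProduct_smul, dotProduct_smul, smul_eq_mul, smul_eq_mul] at h
  obtain ⟨x, y, hxy⟩ := exists_int_forall_pos_mul_add S vecHead (u ⬝ᵥ vecTail ·) hzero hpair'
  refine ⟨vecCons x (y • u), fun s hs => ?_⟩
  rw [cons_dotProduct, smul_dotProduct, smul_eq_mul]
  exact hxy s hs

theorem AddSubsemigroup.zsmul_mem_of_pos {G : Type*} [AddGroup G] (C : AddSubsemigroup G)
    {x : G} (hx : x ∈ C) {k : ℤ} (hk : 0 < k) : k • x ∈ C := by
  obtain ⟨n, rfl⟩ := Int.eq_succ_of_zero_lt hk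
  clear hk
  rw [← Nat.cast_succ, natCast_zsmul]
  induction n with
  | zero => simpa using hx
  | succ n ih => rw [succ_nsmul]; exact C.add_mem ih hx

theorem AddSubsemigroup.exists_dotProduct_pos {d : ℕ} (C : AddSubsemigroup (Fin d → ℤ))
    (hC : (0 : Fin d → ℤ) ∉ C) (S : Finset (Fin d → ℤ)) (hS : (S : Set (Fin d → ℤ)) ⊆ C) :
    ∃ u, ∀ s ∈ S, 0 < u ⬝ᵥ s := by
  induction d with
  | zero => exact ⟨0, fun s hs => absurd (Subsingleton.elim s 0 ▸ hS hs) hC⟩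
  | succ d ih =>
    let consZero : AddHom (Fin d → ℤ) (Fin (d + 1) → ℤ) :=
      ⟨vecCons 0, fun v w => by rw [cons_add_cons, add_zero]⟩
    have hcons : ∀ w : Fin (d + 1) → ℤ, vecHead w = 0 → consZero (vecTail w) = w :=
      fun w hw => by simpa [consZero, hw] using cons_head_tail w
    let S' := (S.filter (vecHead · = 0)).image vecTail ∪
      ((S ×ˢ S).filter fun q => 0 < vecHead q.1 ∧ vecHead q.2 < 0).image
        fun q => vecTail (vecHead q.1 • q.2 - vecHead q.2 • q.1)
    have hS' : (S' : Set (Fin d → ℤ)) ⊆ C.comap consZero := by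
      intro w hw
      simp only [S', coe_union, coe_image, coe_filter, Set.mem_union, Set.mem_image,
        Set.mem_ofPred_eq, mem_product, Prod.exists] at hw
      rcases hw with ⟨s, ⟨hs, hs0⟩, rfl⟩ | ⟨p, n, ⟨⟨hp, hn⟩, hp0, hn0⟩, rfl⟩
      · change consZero _ ∈ C
        simpa [hcons s hs0] using hS hs
      · change consZero _ ∈ C
        rw [hcons _ (by simp [vecHead, mul_comm]), sub_eq_add_neg, ← neg_smul]
        exact C.add_mem (C.zsmul_mem_of_pos (hS hn) hp0)
          (C.zsmul_mem_of_pos (hS hp) (neg_pos.2 hn0))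
    obtain ⟨u, hu⟩ := ih (C.comap consZero) (by simpa [consZero] using hC) S' hS'
    refine exists_dotProduct_pos_of_tail S u (fun s hs hs0 => hu _ ?_)
      fun p hp n hn hp0 hn0 => hu _ ?_
    · exact mem_union_left _ (mem_image_of_mem _ (mem_filter.2 ⟨hs, hs0⟩))
    · exact mem_union_right _
        (mem_image.2 ⟨(p, n), mem_filter.2 ⟨mem_product.2 ⟨hp, hn⟩, hp0, hn0⟩, rfl⟩)

def strictPositiveCone {G : Type*} [AddZeroClass G] (le : G → G → Prop) [IsTrans G le]
    [Std.Antisymm le] (hcompat : ∀ u v w : G, le u v → le (u + w) (v + w)) :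
    AddSubsemigroup G where
  carrier := {x | le 0 x ∧ x ≠ 0}
  add_mem' {x y} hx hy := by
    have hxy : le y (x + y) := by simpa using hcompat 0 x y hx.1
    refine ⟨_root_.trans hy.1 hxy, fun h => hy.2 (antisymm (h ▸ hxy) hy.1)⟩

theorem order_preserving_projection
    {d : ℕ}
    -- a translation-invariant total order on `ℤ^d`:
    (le : (Fin d → ℤ) → (Fin d → ℤ) → Prop)
    (hlin : IsLinearOrder (Fin d → ℤ) le)
    (hcompat : ∀ u v w : Fin d → ℤ, le u v → le (u + w) (v + w))
    -- a finite subset of `ℤ^d`: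
    (F : Finset (Fin d → ℤ)) :
    -- there is `u ∈ ℤ^d` such that `e(a) = u·a` is order preserving on `F`:
    ∃ u : Fin d → ℤ, ∀ m ∈ F, ∀ n ∈ F,
      (le m n ∧ m ≠ n) → (∑ i, u i * m i) < (∑ i, u i * n i) := by
  classical
  let P := strictPositiveCone le hcompat
  let S := ((F ×ˢ F).filter fun q => le q.1 q.2 ∧ q.1 ≠ q.2).image fun q => q.2 - q.1
  have hSP : (S : Set (Fin d → ℤ)) ⊆ P := by
    intro x hx
    obtain ⟨⟨m, n⟩, hmn, rfl⟩ := mem_image.1 hx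
    obtain ⟨hle, hne⟩ := (mem_filter.1 hmn).2
    exact ⟨by simpa [← sub_eq_add_neg] using hcompat m n (-m) hle, sub_ne_zero.2 hne.symm⟩
  obtain ⟨u, hu⟩ := P.exists_dotProduct_pos (fun h => h.2 rfl) S hSP
  refine ⟨u, fun m hm n hn hmn => ?_⟩
  have h := hu (n - m)
    (mem_image.2 ⟨(m, n), mem_filter.2 ⟨mem_product.2 ⟨hm, hn⟩, hmn⟩, rfl⟩)
  rwa [dotProduct_sub, sub_pos] at h
end
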